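/- arXiv:2410.14889 — 3 statements merged into one kernel-verified Lean document; each statement's English description precedes it below -/
import Mathlib

section
/- Let H be a separable Hilbert space over 𝔽 = ℝ or ℂ, let P be a bounded positive operator on H, and let K be a bounded self-adjoint operator on H such that |⟨K x, x⟩| ≤ ⟨P x, x⟩ for every x ∈ H. Then |⟨K x, y⟩| ≤ ‖√P x‖ · ‖√P y‖ for all x, y ∈ H. -/
noncomputable section

/-- Let `H` be a separable Hilbert space over `𝕜 = ℝ` or `ℂ`, `P` a bounded positive operator
and `K` a bounded self-adjoint operator with `|⟨K x, x⟩| ≤ ⟨P x, x⟩` for every `x`. Then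
`|⟨K x, y⟩| ≤ ‖√P x‖ ⬝ ‖√P y‖` for all `x, y ∈ H`.
(`sqrtP` denotes the unique positive square root of `P`.) -/
theorem stmt4 (𝕜 : Type*) [RCLike 𝕜] (H : Type*) [NormedAddCommGroup H]
    [InnerProductSpace 𝕜 H] [CompleteSpace H] [TopologicalSpace.SeparableSpace H]
    (P K sqrtP : H →L[𝕜] H) (hP : P.IsPositive) (hK : IsSelfAdjoint K)
    (hbound : ∀ x : H, ‖(inner 𝕜 (K x) x : 𝕜)‖ ≤ RCLike.re (inner 𝕜 (P x) x : 𝕜))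
    (hsqrt : sqrtP.IsPositive) (hsqrt2 : sqrtP ∘L sqrtP = P) :
    ∀ x y : H, ‖(inner 𝕜 (K x) y : 𝕜)‖ ≤ ‖sqrtP x‖ * ‖sqrtP y‖ := by
  have hsymS := hsqrt.1
  have hsymK := hK.isSymmetric
  have hQ : ∀ z : H, RCLike.re (inner 𝕜 (P z) z : 𝕜) = ‖sqrtP z‖ ^ 2 := by
    intro z
    rw [← hsqrt2]
    have : (inner 𝕜 ((sqrtP ∘L sqrtP) z) z : 𝕜) = inner 𝕜 (sqrtP z) (sqrtP z) := by
      simpa using hsymS (sqrtP z) z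
    rw [this, inner_self_eq_norm_sq]
  have hbound' : ∀ z : H, ‖(inner 𝕜 (K z) z : 𝕜)‖ ≤ ‖sqrtP z‖ ^ 2 := fun z => (hQ z) ▸ hbound z
  -- step B
  have hB : ∀ a b : H, RCLike.re (inner 𝕜 (K a) b : 𝕜) ≤ (‖sqrtP a‖ ^ 2 + ‖sqrtP b‖ ^ 2) / 2 := by
    intro a b
    have hid : (inner 𝕜 (K (a + b)) (a + b) : 𝕜) - inner 𝕜 (K (a - b)) (a - b)
        = 2 * (inner 𝕜 (K a) b + inner 𝕜 (K b) a) := by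
      simp only [map_add, map_sub, inner_add_left, inner_add_right, inner_sub_left,
        inner_sub_right]
      ring
    have hba : RCLike.re (inner 𝕜 (K b) a : 𝕜) = RCLike.re (inner 𝕜 (K a) b : 𝕜) := by
      have h := hsymK b a
      simp only [ContinuousLinearMap.coe_coe] at h
      rw [h, ← inner_conj_symm b (K a)]
      exact RCLike.conj_re _
    have h4 : RCLike.re ((inner 𝕜 (K (a + b)) (a + b) : 𝕜) - inner 𝕜 (K (a - b)) (a - b))
        = 4 * RCLike.re (inner 𝕜 (K a) b : 𝕜) := by
      rw [hid, two_mul, map_add, map_add, hba]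
      ring
    rw [map_sub] at h4
    have hre1 : RCLike.re (inner 𝕜 (K (a + b)) (a + b) : 𝕜) ≤ ‖sqrtP (a + b)‖ ^ 2 :=
      le_trans (RCLike.re_le_norm _) (hbound' (a + b))
    have hre2 : -‖sqrtP (a - b)‖ ^ 2 ≤ RCLike.re (inner 𝕜 (K (a - b)) (a - b) : 𝕜) := by
      have h := RCLike.abs_re_le_norm (inner 𝕜 (K (a - b)) (a - b) : 𝕜)
      have := le_trans h (hbound' (a - b))
      cases abs_le.1 this with
      | intro h1 h2 => linarith
    have hpar : ‖sqrtP (a + b)‖ ^ 2 + ‖sqrtP (a - b)‖ ^ 2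
        = 2 * (‖sqrtP a‖ ^ 2 + ‖sqrtP b‖ ^ 2) := by
      have h := parallelogram_law_with_norm 𝕜 (sqrtP a) (sqrtP b)
      simp only [map_add, map_sub] at *
      nlinarith [h]
    nlinarith [h4, hre1, hre2, hpar]
  -- step C : scaling
  have hC : ∀ a b : H, ∀ t : ℝ, 0 < t → RCLike.re (inner 𝕜 (K a) b : 𝕜)
      ≤ (t ^ 2 * ‖sqrtP a‖ ^ 2 + ‖sqrtP b‖ ^ 2 / t ^ 2) / 2 := by
    intro a b t ht
    have h := hB (((t : ℝ) : 𝕜) • a) (((t⁻¹ : ℝ) : 𝕜) • b)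
    have hinner : (inner 𝕜 (K (((t : ℝ) : 𝕜) • a)) (((t⁻¹ : ℝ) : 𝕜) • b) : 𝕜)
        = inner 𝕜 (K a) b := by
      rw [map_smul, inner_smul_left, inner_smul_right, RCLike.conj_ofReal, ← mul_assoc]
      norm_cast
      rw [mul_inv_cancel₀ ht.ne']
      simp
    rw [hinner] at h
    have hn1 : ‖sqrtP (((t : ℝ) : 𝕜) • a)‖ = t * ‖sqrtP a‖ := by
      rw [map_smul, norm_smul, RCLike.norm_ofReal, abs_of_pos ht]
    have hn2 : ‖sqrtP (((t⁻¹ : ℝ) : 𝕜) • b)‖ = t⁻¹ * ‖sqrtP b‖ := by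
      rw [map_smul, norm_smul, RCLike.norm_ofReal, abs_of_pos (inv_pos.2 ht)]
    rw [hn1, hn2] at h
    calc RCLike.re (inner 𝕜 (K a) b : 𝕜) ≤ ((t * ‖sqrtP a‖) ^ 2 + (t⁻¹ * ‖sqrtP b‖) ^ 2) / 2 := h
      _ = (t ^ 2 * ‖sqrtP a‖ ^ 2 + ‖sqrtP b‖ ^ 2 / t ^ 2) / 2 := by
          field_simp
  -- step D : optimize over t
  have hD : ∀ a b : H, RCLike.re (inner 𝕜 (K a) b : 𝕜) ≤ ‖sqrtP a‖ * ‖sqrtP b‖ := by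
    intro a b
    set A := ‖sqrtP a‖ with hA
    set B := ‖sqrtP b‖ with hBdef
    have hA0 : 0 ≤ A := norm_nonneg _
    have hB0 : 0 ≤ B := norm_nonneg _
    refine le_of_forall_pos_le_add ?_
    intro ε hε
    set δ : ℝ := min 1 (ε / (A + B + 2)) with hδdef
    have hδ : 0 < δ := lt_min one_pos (div_pos hε (by linarith))
    have hδ1 : δ ≤ 1 := min_le_left _ _
    have hδ2 : δ * (A + B + 2) ≤ ε := by
      have h := min_le_right 1 (ε / (A + B + 2))
      calc δ * (A + B + 2) ≤ (ε / (A + B + 2)) * (A + B + 2) := by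
            apply mul_le_mul_of_nonneg_right h (by linarith)
        _ = ε := by field_simp
    have hεA : 0 < A + δ := by linarith
    have hεB : 0 < B + δ := by linarith
    set t : ℝ := Real.sqrt ((B + δ) / (A + δ)) with htdef
    have ht : 0 < t := Real.sqrt_pos.2 (div_pos hεB hεA)
    have ht2 : t ^ 2 = (B + δ) / (A + δ) := Real.sq_sqrt (le_of_lt (div_pos hεB hεA))
    have hCt := hC a b t ht
    rw [ht2] at hCt
    have key : ((B + δ) / (A + δ) * A ^ 2 + B ^ 2 / ((B + δ) / (A + δ))) / 2
        ≤ (A + δ) * (B + δ) := by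
      rw [div_div_eq_mul_div, div_mul_eq_mul_div, div_add_div _ _ hεA.ne' hεB.ne', div_div,
        div_le_iff₀ (by positivity)]
      have h1 : A ^ 2 * (B + δ) ^ 2 ≤ (A + δ) ^ 2 * (B + δ) ^ 2 :=
        mul_le_mul_of_nonneg_right (by nlinarith) (sq_nonneg _)
      have h2 : B ^ 2 * (A + δ) ^ 2 ≤ (B + δ) ^ 2 * (A + δ) ^ 2 :=
        mul_le_mul_of_nonneg_right (by nlinarith) (sq_nonneg _)
      nlinarith [h1, h2]
    have hfinal : (A + δ) * (B + δ) ≤ A * B + ε := by nlinarith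
    calc RCLike.re (inner 𝕜 (K a) b : 𝕜)
        ≤ ((B + δ) / (A + δ) * A ^ 2 + B ^ 2 / ((B + δ) / (A + δ))) / 2 := hCt
      _ ≤ (A + δ) * (B + δ) := key
      _ ≤ A * B + ε := hfinal
  -- phase rotation
  intro x y
  rcases eq_or_ne (inner 𝕜 (K x) y : 𝕜) 0 with h0 | h0
  · rw [h0, norm_zero]
    exact mul_nonneg (norm_nonneg _) (norm_nonneg _)
  · set z : 𝕜 := inner 𝕜 (K x) y with hz
    set c : 𝕜 := (‖z‖ : 𝕜) / z with hc
    have hcnorm : ‖c‖ = 1 := by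
      rw [hc, norm_div, RCLike.norm_ofReal, abs_of_nonneg (norm_nonneg _),
        div_self (norm_ne_zero_iff.2 h0)]
    set d : 𝕜 := starRingEnd 𝕜 c with hd
    have h1 : (inner 𝕜 (K (d • x)) y : 𝕜) = c * z := by
      rw [map_smul, inner_smul_left, hd, RCLike.conj_conj]
    have h2 : c * z = (‖z‖ : 𝕜) := by
      rw [hc, div_mul_cancel₀ _ h0]
    have h3 := hD (d • x) y
    rw [h1, h2, RCLike.ofReal_re] at h3
    have h4 : ‖sqrtP (d • x)‖ = ‖sqrtP x‖ := by
      rw [map_smul, norm_smul, hd, RCLike.norm_conj, hcnorm, one_mul]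
    rw [h4] at h3
    exact h3
end
end

section
/- (Rank-one extreme points.) Let n ≥ 1 and let C be the spectrahedron corresponding to {(A_j, c_j)}_{j=1}^n, where not all c_j are zero. Then, for both 𝔽 = ℝ and 𝔽 = ℂ, the rank-one extreme points of C are precisely the operators P = x ⊗ x for nonzero x ∈ H satisfying ⟨A_j x, x⟩ = c_j for every j = 1, …, n. -/
open scoped ENNReal

noncomputable section

/-- `v` is an *extreme point* of `C` if `v ∈ C` and there are no distinct `p₁, p₂ ∈ C`
and `α ∈ (0,1)` with `v = α • p₁ + (1 - α) • p₂`. -/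
def IsExtremePt (𝕜 : Type*) [RCLike 𝕜] {V : Type*} [AddCommGroup V] [Module 𝕜 V]
    (C : Set V) (v : V) : Prop :=
  v ∈ C ∧ ¬ ∃ p₁ ∈ C, ∃ p₂ ∈ C, p₁ ≠ p₂ ∧ ∃ α : ℝ, 0 < α ∧ α < 1 ∧
      v = (α : 𝕜) • p₁ + ((1 - α : ℝ) : 𝕜) • p₂

/-- The trace of a bounded operator `T` computed with respect to the Hilbert basis `e`,
`Tr T = ∑ᵢ ⟨eᵢ, T eᵢ⟩` (for trace-class `T` this is independent of the basis). -/
noncomputable def opTrace {𝕜 : Type*} [RCLike 𝕜] {H : Type*} [NormedAddCommGroup H]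
    [InnerProductSpace 𝕜 H] {ι : Type*} (e : HilbertBasis ι 𝕜 H) (T : H →L[𝕜] H) : 𝕜 :=
  ∑' i, (inner 𝕜 (e i) (T (e i)) : 𝕜)

/-- Membership in the Schatten `p`-class (for a finite exponent `p`): `T` admits a
singular-value-type decomposition `T x = ∑ᵢ sᵢ ⟨fᵢ, x⟩ gᵢ` with orthonormal families
`f`, `g` and nonnegative `p`-summable singular values `s`. -/
def MemSchattenFin {𝕜 : Type*} [RCLike 𝕜] {H : Type*} [NormedAddCommGroup H]
    [InnerProductSpace 𝕜 H] (p : ℝ) (T : H →L[𝕜] H) : Prop :=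
  ∃ (ι : Type) (_ : Countable ι) (s : ι → ℝ) (f g : ι → H),
    Orthonormal 𝕜 f ∧ Orthonormal 𝕜 g ∧ (∀ i, 0 ≤ s i) ∧
    Summable (fun i => s i ^ p) ∧
    ∀ x : H, T x = ∑' i, (((s i : ℝ) : 𝕜) * (inner 𝕜 (f i) x : 𝕜)) • g i

/-- Membership in the Schatten `p`-class, `p ∈ [1,∞]`; `S_∞` is interpreted as the class of
all bounded operators. -/
def MemSchatten {𝕜 : Type*} [RCLike 𝕜] {H : Type*} [NormedAddCommGroup H]
    [InnerProductSpace 𝕜 H] (p : ℝ≥0∞) (T : H →L[𝕜] H) : Prop :=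
  if p = ⊤ then True else MemSchattenFin p.toReal T

/-- The rank-one operator `f ⊗ g : H → H` given by `(f ⊗ g) x = ⟨g, x⟩ f`. -/
noncomputable def rankOne {𝕜 : Type*} [RCLike 𝕜] {H : Type*} [NormedAddCommGroup H]
    [InnerProductSpace 𝕜 H] (f g : H) : H →L[𝕜] H :=
  (innerSL 𝕜 g).smulRight f


section helpers

open RCLike ContinuousLinearMap

variable {𝕜 : Type*} [RCLike 𝕜] {H : Type*} [NormedAddCommGroup H] [InnerProductSpace 𝕜 H]

local notation "⟪" x ", " y "⟫" => @inner 𝕜 _ _ x y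

lemma rankOne_apply' (f g x : H) : (rankOne f g : H →L[𝕜] H) x = ⟪g, x⟫ • f := rfl

lemma symm_clm {Q : H →L[𝕜] H} (hsym : (Q : H →ₗ[𝕜] H).IsSymmetric) (u v : H) :
    ⟪Q u, v⟫ = ⟪u, Q v⟫ := hsym u v

lemma opTrace_rankOne_comp {ι₀ : Type*} (e : HilbertBasis ι₀ 𝕜 H) (A : H →L[𝕜] H)
    (hA : (A : H →ₗ[𝕜] H).IsSymmetric) (x : H) :
    opTrace e ((rankOne x x : H →L[𝕜] H) ∘L A) = ⟪A x, x⟫ := by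
  have key : ∀ i : ι₀, ⟪e i, ((rankOne x x : H →L[𝕜] H) ∘L A) (e i)⟫
      = ⟪A x, e i⟫ * ⟪e i, x⟫ := by
    intro i
    simp only [ContinuousLinearMap.comp_apply, rankOne_apply', inner_smul_right]
    rw [← symm_clm hA x (e i)]
  rw [opTrace]
  simp_rw [key]
  exact e.tsum_inner_mul_inner (A x) x

lemma opTrace_smul {ι₀ : Type*} (e : HilbertBasis ι₀ 𝕜 H) (T : H →L[𝕜] H) (μ : 𝕜) :
    opTrace e (μ • T) = μ * opTrace e T := by
  rw [opTrace, opTrace, ← tsum_mul_left]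
  congr 1; ext i
  simp [inner_smul_right]

lemma pos_apply_eq_zero [CompleteSpace H] {Q : H →L[𝕜] H} (hQ : Q.IsPositive) {v : H}
    (h : re ⟪Q v, v⟫ = 0) : Q v = 0 := by
  have hsym := hQ.1
  have key : ∀ u : H, re ⟪Q v, u⟫ = 0 := by
    intro u
    set a := re ⟪Q v, u⟫ with ha
    set b := re ⟪Q u, u⟫ with hb
    have hb0 : 0 ≤ b := hQ.2 u
    have hf : ∀ t : ℝ, 0 ≤ 2*t*a + t^2*b := by
      intro t
      have h0 := hQ.2 (v + (t:𝕜) • u)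
      rw [reApplyInnerSelf_apply] at h0
      have hexp : ⟪Q (v + (t:𝕜) • u), v + (t:𝕜) • u⟫
          = ⟪Q v, v⟫ + (t:𝕜) * ⟪Q v, u⟫ + (t:𝕜) * ⟪Q u, v⟫ + (t:𝕜) * ((t:𝕜) * ⟪Q u, u⟫) := by
        rw [map_add, map_smul]
        simp only [inner_add_left, inner_add_right, inner_smul_left, inner_smul_right,
          conj_ofReal]
        ring
      have hvu : re ⟪Q u, v⟫ = a := by
        rw [symm_clm hsym u v, inner_re_symm]
      rw [hexp] at h0
      simp only [map_add, re_ofReal_mul] at h0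
      rw [h, hvu] at h0
      nlinarith [h0]
    have hthis := hf (-a/(b+1))
    have hb1 : (0:ℝ) < b + 1 := by linarith
    have key2 : 0 ≤ (2 * (-a/(b+1)) * a + (-a/(b+1))^2 * b) * (b+1)^2 :=
      mul_nonneg hthis (by positivity)
    have heq : (2 * (-a/(b+1)) * a + (-a/(b+1))^2 * b) * (b+1)^2 = -(a^2) * (b + 2) := by
      field_simp
      ring
    rw [heq] at key2
    have h6 : a^2 ≤ 0 := by nlinarith
    have h7 : a^2 = 0 := le_antisymm h6 (sq_nonneg a)
    exact pow_eq_zero_iff (two_ne_zero) |>.mp h7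
  have h2 := key (Q v)
  rw [inner_self_eq_norm_sq] at h2
  have : ‖Q v‖ = 0 := by nlinarith [norm_nonneg (Q v)]
  simpa using this

lemma eq_smul_rankOne {Q : H →L[𝕜] H} (hsym : (Q : H →ₗ[𝕜] H).IsSymmetric) {x : H}
    (hx : x ≠ 0) (hker : ∀ v : H, ⟪x, v⟫ = 0 → Q v = 0) :
    Q = ((⟪x, Q x⟫ / ((‖x‖ : 𝕜) ^ 2) ^ 2)) • (rankOne x x : H →L[𝕜] H) := by
  have hxx : ⟪x, x⟫ = (‖x‖ : 𝕜) ^ 2 := inner_self_eq_norm_sq_to_K x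
  have hnx : (‖x‖ : 𝕜) ^ 2 ≠ 0 :=
    pow_ne_zero 2 (by exact_mod_cast norm_ne_zero_iff.mpr hx : (‖x‖ : 𝕜) ≠ 0)
  set t' : 𝕜 := ⟪x, Q x⟫ / (‖x‖ : 𝕜) ^ 2 with ht'
  have hQx : Q x = t' • x := by
    set w : H := Q x - t' • x with hw
    have hxw : ⟪x, w⟫ = 0 := by
      rw [hw]
      simp only [inner_sub_right, inner_smul_right, hxx]
      field_simp [ht']
      rw [ht', div_mul_cancel₀ _ hnx, sub_self]
    have hQw : Q w = 0 := hker w hxw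
    have hwx : ⟪w, x⟫ = 0 := by rw [← inner_conj_symm w x, hxw, map_zero]
    have h1 : ⟪w, Q x⟫ = 0 := by rw [← symm_clm hsym w x, hQw, inner_zero_left]
    have h2 : ⟪w, w⟫ = 0 := by
      have hdec : ⟪w, Q x⟫ = ⟪w, w⟫ + t' * ⟪w, x⟫ := by
        conv_lhs => rw [show Q x = w + t' • x by rw [hw]; abel]
        simp [inner_add_right, inner_smul_right]
      rw [h1, hwx, mul_zero, add_zero] at hdec
      exact hdec.symm
    have hw0 : w = 0 := inner_self_eq_zero.mp h2
    rw [hw] at hw0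
    exact sub_eq_zero.mp hw0
  ext y
  set d : 𝕜 := ⟪x, y⟫ / (‖x‖ : 𝕜) ^ 2 with hd
  have hxw2 : ⟪x, y - d • x⟫ = 0 := by
    simp only [inner_sub_right, inner_smul_right, hxx]
    field_simp [hd]
    rw [hd, div_mul_cancel₀ _ hnx, sub_self]
  have h3 : Q (y - d • x) = 0 := hker _ hxw2
  have hQy : Q y = d • Q x := by
    rw [map_sub, map_smul, sub_eq_zero] at h3
    exact h3
  have hr : ((rankOne x x : H →L[𝕜] H)) y = ⟪x, y⟫ • x := rfl
  have hsc : d * t' = (⟪x, Q x⟫ / ((‖x‖ : 𝕜) ^ 2) ^ 2) * ⟪x, y⟫ := by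
    rw [hd, ht']
    field_simp
  rw [hQy, hQx, smul_smul, hsc, ContinuousLinearMap.smul_apply, hr, smul_smul]
  have hback : ⟪x, t' • x⟫ = ⟪x, Q x⟫ := by
    rw [inner_smul_right, hxx, ht']
    rw [div_mul_cancel₀ _ hnx]
  rw [hback]

lemma rankOne_isPositive [CompleteSpace H] (x : H) :
    (rankOne x x : H →L[𝕜] H).IsPositive := by
  constructor
  · show ((rankOne x x : H →L[𝕜] H) : H →ₗ[𝕜] H).IsSymmetric
    intro u v
    simp only [ContinuousLinearMap.coe_coe, rankOne_apply', inner_smul_left, inner_smul_right,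
      inner_conj_symm]
    ring
  · intro v
    rw [reApplyInnerSelf_apply, rankOne_apply', inner_smul_left, RCLike.conj_mul]
    simp only [← ofReal_pow, ofReal_re]
    positivity

lemma range_rankOne {x : H} (hx : x ≠ 0) :
    LinearMap.range ((rankOne x x : H →L[𝕜] H) : H →ₗ[𝕜] H) = Submodule.span 𝕜 {x} := by
  apply le_antisymm
  · rintro _ ⟨v, rfl⟩
    show ⟪x, v⟫ • x ∈ _
    exact Submodule.smul_mem _ _ (Submodule.mem_span_singleton_self x)
  · rw [Submodule.span_singleton_le_iff_mem]
    refine ⟨(((‖x‖ : 𝕜)^2)⁻¹) • x, ?_⟩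
    have hnx : (‖x‖ : 𝕜) ^ 2 ≠ 0 :=
      pow_ne_zero 2 (by exact_mod_cast norm_ne_zero_iff.mpr hx : (‖x‖ : 𝕜) ≠ 0)
    show ⟪x, ((‖x‖ : 𝕜)^2)⁻¹ • x⟫ • x = x
    rw [inner_smul_right, inner_self_eq_norm_sq_to_K, inv_mul_cancel₀ hnx, one_smul]

lemma memSchattenFin_rankOne (r : ℝ) {x : H} (hx : x ≠ 0) :
    MemSchattenFin r (rankOne x x : H →L[𝕜] H) := by
  have hn : (‖x‖ : ℝ) ≠ 0 := norm_ne_zero_iff.mpr hx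
  have hnk : (‖x‖ : 𝕜) ≠ 0 := by exact_mod_cast hn
  set u : H := ((‖x‖ : 𝕜)⁻¹) • x with hu
  have hon : Orthonormal 𝕜 (fun _ : Unit => u) := by
    rw [orthonormal_iff_ite]
    intro i j
    rw [if_pos (Subsingleton.elim i j), hu, inner_smul_left, inner_smul_right,
      inner_self_eq_norm_sq_to_K, map_inv₀, conj_ofReal]
    field_simp
  refine ⟨Unit, inferInstance, fun _ => ‖x‖^2, fun _ => u, fun _ => u, hon, hon,
    fun _ => by positivity, Summable.of_finite, ?_⟩
  intro v
  rw [tsum_eq_single () (fun b hb => absurd (Subsingleton.elim b ()) hb)]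
  rw [rankOne_apply', hu]
  simp only [inner_smul_left, smul_smul, map_inv₀, conj_ofReal]
  congr 1
  push_cast
  field_simp

end helpers

/-- (Rank-one extreme points.) Let `C` be the spectrahedron of positive operators `T` in the
Schatten `q`-class satisfying the `n ≥ 1` constraints `Tr (T A_j) = c j`, not all `c j` zero,
where the `A_j` are self-adjoint members of the Schatten `p`-class, `1 ≤ p < ∞`,
`1/p + 1/q = 1`. Then (for `𝕜 = ℝ` or `ℂ`) the rank-one extreme points of `C` are precisely
the operators `P = x ⊗ x` for nonzero `x ∈ H` with `⟨A_j x, x⟩ = c j` for every `j`. -/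
theorem stmt12 (𝕜 : Type*) [RCLike 𝕜] (H : Type*) [NormedAddCommGroup H]
    [InnerProductSpace 𝕜 H] [CompleteSpace H] [TopologicalSpace.SeparableSpace H]
    {ι₀ : Type*} (e : HilbertBasis ι₀ 𝕜 H)
    (p q : ℝ≥0∞) (hp : 1 ≤ p) (hptop : p ≠ ⊤) (hpq : 1 / p + 1 / q = 1)
    (n : ℕ) (hn : 1 ≤ n) (Aop : Fin n → (H →L[𝕜] H)) (c : Fin n → 𝕜)
    (hAsa : ∀ j, IsSelfAdjoint (Aop j)) (hASch : ∀ j, MemSchatten p (Aop j))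
    (hc : ∃ j, c j ≠ 0)
    (C : Set (H →L[𝕜] H))
    (hC : C = {T : H →L[𝕜] H | T.IsPositive ∧ MemSchatten q T ∧
      ∀ j, opTrace e (T ∘L Aop j) = c j}) :
    ∀ P : H →L[𝕜] H,
      (IsExtremePt 𝕜 C P ∧ Module.finrank 𝕜 ↥(LinearMap.range (P : H →ₗ[𝕜] H)) = 1) ↔
      (∃ x : H, x ≠ 0 ∧ (∀ j, (inner 𝕜 (Aop j x) x : 𝕜) = c j) ∧ P = rankOne x x) := by
  intro P
  obtain ⟨j₀, hj₀⟩ := hc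
  have hsymA : ∀ j, ((Aop j : H →L[𝕜] H) : H →ₗ[𝕜] H).IsSymmetric :=
    fun j => ContinuousLinearMap.isSelfAdjoint_iff_isSymmetric.mp (hAsa j)
  constructor
  · rintro ⟨⟨hPC, _hPext⟩, hrank⟩
    simp only [hC, Set.mem_setOf_eq] at hPC
    obtain ⟨hPpos, _hPSch, hPtr⟩ := hPC
    obtain ⟨v₀, hv₀ne, hv₀⟩ := finrank_eq_one_iff'.mp hrank
    set y : H := (v₀ : H) with hydef
    have hy : y ≠ 0 := fun h => hv₀ne (Subtype.ext h)
    have hsym : (P : H →ₗ[𝕜] H).IsSymmetric :=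
      hPpos.1
    have hker : ∀ v : H, (inner 𝕜 y v : 𝕜) = 0 → P v = 0 := by
      intro v hv
      apply pos_apply_eq_zero hPpos
      obtain ⟨c', hc'⟩ := hv₀ ⟨(P : H →ₗ[𝕜] H) v, LinearMap.mem_range_self _ v⟩
      have hPv : P v = c' • y := (congrArg Subtype.val hc').symm
      rw [hPv, inner_smul_left, hv, mul_zero, map_zero]
    have hrep := eq_smul_rankOne hsym hy hker
    set t : ℝ := RCLike.re (inner 𝕜 y (P y) : 𝕜) with htdef
    have hreal : (inner 𝕜 y (P y) : 𝕜) = (t : 𝕜) := by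
      have hconj : (starRingEnd 𝕜) (inner 𝕜 y (P y) : 𝕜) = inner 𝕜 y (P y) := by
        rw [inner_conj_symm]
        exact symm_clm hsym y y
      rw [htdef]
      exact (RCLike.conj_eq_iff_re.mp hconj).symm
    have ht0 : (0 : ℝ) ≤ t := by
      have h := hPpos.2 y
      rw [ContinuousLinearMap.reApplyInnerSelf_apply, inner_re_symm] at h
      exact h
    have htne : t ≠ 0 := by
      intro h0
      have hP0 : P = 0 := by
        rw [hrep, hreal, h0]
        simp
      obtain ⟨u, hu⟩ := v₀.2
      have hu' : P u = y := hu
      rw [hP0] at hu'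
      simp only [ContinuousLinearMap.zero_apply] at hu'
      exact hy hu'.symm
    have ht : (0 : ℝ) < t := lt_of_le_of_ne ht0 (Ne.symm htne)
    have hny : (‖y‖ : ℝ) ≠ 0 := norm_ne_zero_iff.mpr hy
    set a : ℝ := Real.sqrt t / ‖y‖^2 with hadef
    have ha : a ≠ 0 := by
      apply div_ne_zero
      · exact ne_of_gt (Real.sqrt_pos.mpr ht)
      · positivity
    have haa : ((a : ℝ) : 𝕜) * ((a : ℝ) : 𝕜) = (t : 𝕜) / (((‖y‖ : 𝕜)^2)^2) := by
      have h1 : (a * a : ℝ) = t / ((‖y‖ : ℝ)^2)^2 := by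
        rw [hadef, div_mul_div_comm, Real.mul_self_sqrt ht0]
        ring
      rw [← RCLike.ofReal_mul, h1]
      push_cast
      ring
    have hPeq : P = rankOne (((a : ℝ) : 𝕜) • y) (((a : ℝ) : 𝕜) • y) := by
      rw [hrep, hreal]
      ext v
      rw [ContinuousLinearMap.smul_apply, rankOne_apply', rankOne_apply', inner_smul_left,
        RCLike.conj_ofReal, smul_smul, smul_smul]
      congr 1
      rw [← haa]
      ring
    refine ⟨((a : ℝ) : 𝕜) • y, ?_, ?_, hPeq⟩
    · exact smul_ne_zero (by exact_mod_cast ha) hy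
    · intro j
      rw [← hPtr j, hPeq, opTrace_rankOne_comp e (Aop j) (hsymA j)]
  · rintro ⟨x, hx, hcon, rfl⟩
    have hmem : (rankOne x x : H →L[𝕜] H) ∈ C := by
      simp only [hC, Set.mem_setOf_eq]
      refine ⟨rankOne_isPositive x, ?_, ?_⟩
      · by_cases hq : q = ⊤
        · simp [MemSchatten, hq]
        · simpa [MemSchatten, hq] using memSchattenFin_rankOne (𝕜 := 𝕜) q.toReal hx
      · intro j
        rw [opTrace_rankOne_comp e (Aop j) (hsymA j)]
        exact hcon j
    refine ⟨⟨hmem, ?_⟩, ?_⟩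
    · rintro ⟨P₁, hP₁, P₂, hP₂, hne, α, hα0, hα1, heq⟩
      simp only [hC, Set.mem_setOf_eq] at hP₁ hP₂
      obtain ⟨h1pos, _, h1tr⟩ := hP₁
      obtain ⟨h2pos, _, h2tr⟩ := hP₂
      have hkey : ∀ v : H, (inner 𝕜 x v : 𝕜) = 0 →
          RCLike.re (inner 𝕜 (P₁ v) v : 𝕜) = 0 ∧ RCLike.re (inner 𝕜 (P₂ v) v : 𝕜) = 0 := by
        intro v hv
        have happ : (0 : H) = (α : 𝕜) • P₁ v + ((1 - α : ℝ) : 𝕜) • P₂ v := by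
          have h := congrArg (fun (T : H →L[𝕜] H) => T v) heq
          simpa [rankOne_apply', hv] using h
        have hre : (0 : ℝ) = α * RCLike.re (inner 𝕜 (P₁ v) v : 𝕜)
            + (1 - α) * RCLike.re (inner 𝕜 (P₂ v) v : 𝕜) := by
          have h := congrArg (fun w : H => RCLike.re (inner 𝕜 w v : 𝕜)) happ
          simpa [inner_add_left, inner_smul_left, RCLike.conj_ofReal, map_add,
            RCLike.re_ofReal_mul] using h
        have r1 : 0 ≤ RCLike.re (inner 𝕜 (P₁ v) v : 𝕜) := by
          simpa [ContinuousLinearMap.reApplyInnerSelf_apply] using h1pos.2 v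
        have r2 : 0 ≤ RCLike.re (inner 𝕜 (P₂ v) v : 𝕜) := by
          simpa [ContinuousLinearMap.reApplyInnerSelf_apply] using h2pos.2 v
        have hα1' : (0 : ℝ) ≤ 1 - α := by linarith
        have e1 : α * RCLike.re (inner 𝕜 (P₁ v) v : 𝕜) = 0 := by
          nlinarith [mul_nonneg hα0.le r1, mul_nonneg hα1' r2]
        have e2 : (1 - α) * RCLike.re (inner 𝕜 (P₂ v) v : 𝕜) = 0 := by
          nlinarith [mul_nonneg hα0.le r1, mul_nonneg hα1' r2]
        constructor
        · exact (mul_eq_zero.mp e1).resolve_left (ne_of_gt hα0)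
        · exact (mul_eq_zero.mp e2).resolve_left (by intro h'; linarith [h'] )
      have hmk : ∀ (Q : H →L[𝕜] H), Q.IsPositive →
          (∀ j, opTrace e (Q ∘L Aop j) = c j) →
          (∀ v, (inner 𝕜 x v : 𝕜) = 0 → RCLike.re (inner 𝕜 (Q v) v : 𝕜) = 0) →
          Q = rankOne x x := by
        intro Q hQpos hQtr hQz
        have hQsym : (Q : H →ₗ[𝕜] H).IsSymmetric :=
          hQpos.1
        have hQker : ∀ v, (inner 𝕜 x v : 𝕜) = 0 → Q v = 0 := fun v hv =>
          pos_apply_eq_zero hQpos (hQz v hv)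
        have hQrep := eq_smul_rankOne hQsym hx hQker
        set μ : 𝕜 := (inner 𝕜 x (Q x) : 𝕜) / (((‖x‖ : 𝕜) ^ 2) ^ 2) with hμ
        have htr : c j₀ = μ * c j₀ := by
          conv_lhs => rw [← hQtr j₀, hQrep]
          rw [ContinuousLinearMap.smul_comp, opTrace_smul,
            opTrace_rankOne_comp e (Aop j₀) (hsymA j₀), hcon j₀]
        have h5 : (μ - 1) * c j₀ = 0 := by linear_combination -htr
        have hμ1 : μ = 1 := by
          have h6 := (mul_eq_zero.mp h5).resolve_right hj₀
          exact sub_eq_zero.mp h6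
        rw [hQrep, hμ1, one_smul]
      have hP1 : P₁ = rankOne x x := hmk P₁ h1pos h1tr (fun v hv => (hkey v hv).1)
      have hP2 : P₂ = rankOne x x := hmk P₂ h2pos h2tr (fun v hv => (hkey v hv).2)
      exact hne (hP1.trans hP2.symm)
    · rw [range_rankOne hx]
      exact finrank_span_singleton hx
end
end

section
/- Let A be a real n × n positive semi-definite matrix of rank r. Then rank(A ⊙ A) ≤ r(r+1)/2, where A ⊙ A is the Hadamard (entrywise) square of A. -/
noncomputable section

open Finset in
lemma sum_sq_aux {m : ℕ} (x : Fin m → ℝ) :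
    (∑ k, x k) ^ 2 =
      ∑ s : {p : Fin m × Fin m // p.1 ≤ p.2},
        ((if s.1.1 = s.1.2 then (1:ℝ) else 2) * (x s.1.1 * x s.1.2)) := by
  classical
  have h1 : (∑ k, x k) ^ 2 = ∑ p : Fin m × Fin m, x p.1 * x p.2 := by
    rw [sq, Finset.sum_mul_sum]
    exact (Fintype.sum_prod_type (f := fun p : Fin m × Fin m => x p.1 * x p.2)).symm
  have hsub : ∑ p ∈ univ.filter (fun p : Fin m × Fin m => p.1 ≤ p.2),
        ((if p.1 = p.2 then (1:ℝ) else 2) * (x p.1 * x p.2))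
      = ∑ s : {p : Fin m × Fin m // p.1 ≤ p.2},
        ((if s.1.1 = s.1.2 then (1:ℝ) else 2) * (x s.1.1 * x s.1.2)) :=
    Finset.sum_subtype _ (by simp) _
  rw [h1, ← hsub]
  rw [← Finset.sum_filter_add_sum_filter_not univ (fun p : Fin m × Fin m => p.1 ≤ p.2)
      (fun p => x p.1 * x p.2)]
  have h2 : ∑ p ∈ univ.filter (fun p : Fin m × Fin m => ¬ p.1 ≤ p.2), x p.1 * x p.2
      = ∑ p ∈ univ.filter (fun p : Fin m × Fin m => p.1 < p.2), x p.1 * x p.2 := by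
    refine Finset.sum_nbij' (fun p => Prod.swap p) (fun p => Prod.swap p) ?_ ?_ ?_ ?_ ?_
    · intro a ha; simp only [mem_filter, mem_univ, true_and, not_le] at ha ⊢; exact ha
    · intro a ha; simp only [mem_filter, mem_univ, true_and, not_le] at ha ⊢; exact ha
    · intro a _; rfl
    · intro a _; rfl
    · intro a _; exact mul_comm _ _
  rw [h2]
  have h3 : ∑ p ∈ univ.filter (fun p : Fin m × Fin m => p.1 ≤ p.2),
        ((if p.1 = p.2 then (1:ℝ) else 2) * (x p.1 * x p.2))
      = ∑ p ∈ univ.filter (fun p : Fin m × Fin m => p.1 ≤ p.2),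
        (x p.1 * x p.2 + if ¬ p.1 = p.2 then x p.1 * x p.2 else 0) := by
    refine Finset.sum_congr rfl fun p hp => ?_
    split_ifs <;> ring
  rw [h3, Finset.sum_add_distrib]
  congr 1
  rw [← Finset.sum_filter, Finset.filter_filter]
  refine Finset.sum_congr (Finset.filter_congr fun p _ => ?_) fun _ _ => rfl
  constructor
  · intro h; exact ⟨le_of_lt h, ne_of_lt h⟩
  · rintro ⟨h, h'⟩; exact lt_of_le_of_ne h h'

/-- Let `A` be a real `n × n` positive semi-definite matrix of rank `r`. Then
`rank (A ⊙ A) ≤ r(r+1)/2`, where `A ⊙ A` is the Hadamard (entrywise) square of `A`. -/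
theorem stmt19 (n : ℕ) (A : Matrix (Fin n) (Fin n) ℝ) (hA : A.PosSemidef)
    (r : ℕ) (hr : A.rank = r) :
    2 * (Matrix.hadamard A A).rank ≤ r * (r + 1) := by
  classical
  obtain ⟨B, hB⟩ : ∃ B : Matrix (Fin n) (Fin n) ℝ, A = B.conjTranspose * B := by
    open scoped MatrixOrder in
    exact CStarAlgebra.nonneg_iff_eq_star_mul_self.mp hA.nonneg
  have hBr : B.rank = r := by
    rw [← hr, hB, Matrix.rank_conjTranspose_mul_self]
  set b : Fin n → EuclideanSpace ℝ (Fin n) := fun j => WithLp.toLp 2 (fun k => B k j) with hb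
  set W := Submodule.span ℝ (Set.range b) with hWdef
  have hmem : ∀ j, b j ∈ W := fun j => Submodule.subset_span ⟨j, rfl⟩
  have hW : Module.finrank ℝ W = r := by
    have h1 : B.rank = Module.finrank ℝ (Submodule.span ℝ (Set.range B.transpose)) :=
      Matrix.rank_eq_finrank_span_cols B
    have h2 : Submodule.span ℝ (Set.range B.transpose)
        = W.map (WithLp.linearEquiv 2 ℝ (Fin n → ℝ) : EuclideanSpace ℝ (Fin n) →ₗ[ℝ] (Fin n → ℝ)) := by
      rw [hWdef, Submodule.map_span, ← Set.range_comp]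
      rfl
    rw [h2, LinearEquiv.finrank_map_eq] at h1
    rw [← h1, hBr]
  let e : OrthonormalBasis (Fin r) ℝ W :=
    (stdOrthonormalBasis ℝ W).reindex (finCongr hW)
  let F : Matrix (Fin n) (Fin r) ℝ := fun i k => e.repr ⟨b i, hmem i⟩ k
  have key : ∀ i j, A i j = ∑ k, F i k * F j k := by
    intro i j
    have h3 : A i j = (inner ℝ (b i) (b j) : ℝ) := by
      rw [hB]
      simp [Matrix.mul_apply, PiLp.inner_apply, RCLike.inner_apply, b]
      exact Finset.sum_congr rfl fun _ _ => mul_comm _ _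
    have h4 : (inner ℝ (b i) (b j) : ℝ) = inner ℝ (⟨b i, hmem i⟩ : W) (⟨b j, hmem j⟩ : W) := rfl
    have h5 : (inner ℝ (⟨b i, hmem i⟩ : W) (⟨b j, hmem j⟩ : W) : ℝ)
        = inner ℝ (e.repr ⟨b i, hmem i⟩) (e.repr ⟨b j, hmem j⟩) :=
      (e.repr.inner_map_map _ _).symm
    have h6 : (inner ℝ (e.repr ⟨b i, hmem i⟩) (e.repr ⟨b j, hmem j⟩) : ℝ)
        = ∑ k, F i k * F j k := by
      simp only [PiLp.inner_apply, RCLike.inner_apply, starRingEnd_apply, star_trivial]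
      exact Finset.sum_congr rfl fun _ _ => mul_comm _ _
    rw [h3, h4, h5, h6]
  set S := {p : Fin r × Fin r // p.1 ≤ p.2}
  let G : Matrix (Fin n) S ℝ := fun i s =>
    (if s.1.1 = s.1.2 then (1:ℝ) else Real.sqrt 2) * (F i s.1.1 * F i s.1.2)
  have hGG : Matrix.hadamard A A = G * G.transpose := by
    ext i j
    rw [Matrix.hadamard_apply, Matrix.mul_apply, key i j, ← sq,
      sum_sq_aux (fun k => F i k * F j k)]
    refine Finset.sum_congr rfl fun s _ => ?_
    simp only [Matrix.transpose_apply]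
    simp only [G]
    split_ifs with h
    · ring
    · have h2 : Real.sqrt 2 ^ 2 = 2 := Real.sq_sqrt (by norm_num)
      linear_combination (-(F i s.1.1 * F j s.1.1 * (F i s.1.2 * F j s.1.2))) * h2
  have h5 : (Matrix.hadamard A A).rank ≤ Fintype.card S := by
    rw [hGG]
    exact (Matrix.rank_mul_le_left G G.transpose).trans (Matrix.rank_le_card_width G)
  have h6 : Fintype.card S = (r + 1) * r / 2 := by
    rw [← Fintype.card_congr (Sym2.sortEquiv (α := Fin r)), Sym2.card, Fintype.card_fin,
      Nat.choose_two_right]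
    simp
  rw [h6] at h5
  have h7 : r * (r + 1) = (r + 1) * r := Nat.mul_comm _ _
  rw [h7]
  omega
end
end
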